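/- Let m ≥ 3 be an odd integer, I := (P_1,…,P_m) the ideal of R = 𝔽₂[z_e : e ∈ E] generated by the characteristic-2 Pfaffians, I^{[2]} := (P_1²,…,P_m²) its Frobenius power, and H_0 := Σ_{1≤i<j≤m} z_{ij}·P_i·P_j. Then H_0·I ⊆ I^{[2]}; that is, H_0·P_i lies in the ideal (P_1²,…,P_m²) for every i ∈ {1,…,m}. -/

import Mathlib

open scoped Classical

noncomputable section

/-- The edges of the complete graph `K_m`: 2-element subsets of `Fin m`. -/
abbrev Edge (m : ℕ) := {e : Sym2 (Fin m) // ¬ e.IsDiag}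

/-- The polynomial ring `𝔽₂[z_e : e ∈ E]`. -/
abbrev R2 (m : ℕ) := MvPolynomial (Edge m) (ZMod 2)

/-- The variable `z_{ij}`, with the convention `z_{ii} = 0`. -/
def Zv (m : ℕ) (i j : Fin m) : R2 m :=
  if h : i = j then 0
  else MvPolynomial.X ⟨s(i, j), by simp only [Sym2.mk_isDiag_iff]; exact h⟩

/-- `M` is a perfect matching of the vertex set `T`. -/
def IsPM (m : ℕ) (T : Finset (Fin m)) (M : Finset (Edge m)) : Prop :=
  (∀ v : Fin m, v ∈ T ↔ ∃ e ∈ M, v ∈ e.val) ∧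
  (∀ e ∈ M, ∀ f ∈ M, ∀ v : Fin m, v ∈ e.val → v ∈ f.val → e = f)

/-- The sum, over all perfect matchings `M` of `T`, of the monomial `∏_{e ∈ M} z_e`. -/
def matchSum (m : ℕ) (T : Finset (Fin m)) : R2 m :=
  ∑ M ∈ Finset.univ.filter (IsPM m T), ∏ e ∈ M, MvPolynomial.X e

/-- The (characteristic 2) Pfaffian `P_i`. -/
def P (m : ℕ) (i : Fin m) : R2 m := matchSum m (Finset.univ.erase i)

/-- `H₀ = Σ_{i<j} z_{ij} P_i P_j`. -/
def H0 (m : ℕ) : R2 m :=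
  ∑ p ∈ Finset.univ.filter (fun p : Fin m × Fin m => p.1 < p.2),
    Zv m p.1 p.2 * P m p.1 * P m p.2

theorem Zv_symm (m : ℕ) (i j : Fin m) : Zv m i j = Zv m j i := by
  unfold Zv
  rcases eq_or_ne i j with h | h
  · subst h; rfl
  · rw [dif_neg h, dif_neg (Ne.symm h)]
    congr 1
    exact Subtype.ext (Sym2.eq_swap)

/-- The differential operator `D_k = Σ_{{u,v} ∈ E, k ∉ {u,v}} z_{uk} z_{kv} ∂/∂z_{uv}`. -/
def D (m : ℕ) (k : Fin m) (f : R2 m) : R2 m :=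
  ∑ e ∈ Finset.univ.filter (fun e : Edge m => k ∉ e.val),
    Sym2.lift ⟨fun u v => Zv m u k * Zv m k v,
      fun u v => by simp only []; rw [Zv_symm m u k, Zv_symm m k v, mul_comm]⟩ e.val *
    MvPolynomial.pderiv e f

/-- `C` is the edge set of a cycle of length `n` in `K_m`. -/
def IsCycleEdges (m n : ℕ) (C : Finset (Edge m)) : Prop :=
  3 ≤ n ∧ ∃ f : ℕ → Fin m,
    (∀ s t, s < n → t < n → f s = f t → s = t) ∧
    (∀ e : Edge m, e ∈ C ↔ ∃ t < n, e.val = s(f t, f ((t + 1) % n)))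

/-- The set of vertices covered by a set of edges. -/
def vertsOf (m : ℕ) (S : Finset (Edge m)) : Finset (Fin m) :=
  Finset.univ.filter (fun v => ∃ e ∈ S, v ∈ e.val)

/-- The degree of the multigraph with edge multiplicities `w` at the vertex `v`. -/
def degw (m : ℕ) (w : Edge m → ℕ) (v : Fin m) : ℕ :=
  ∑ e : Edge m, if v ∈ e.val then w e else 0

/-- `w` is `2`-regular and the connected components of the multigraph with edge
multiplicities `w` are a single odd cycle together with a collection of doubled edges. -/
def memOC (m : ℕ) (w : Edge m → ℕ) : Prop :=
  (∀ v : Fin m, degw m w v = 2) ∧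
  ∃ (n : ℕ) (C M : Finset (Edge m)), Odd n ∧ IsCycleEdges m n C ∧
    IsPM m (Finset.univ \ vertsOf m C) M ∧
    ∀ e : Edge m, w e = if e ∈ C then 1 else if e ∈ M then 2 else 0

/-!
Let `Z = (z_{ij})` be the symmetric matrix of variables (zero diagonal) and `P = (P_i)`. The
Laplace expansion of a Pfaffian along a vertex implies, in characteristic 2, the kernel relation
`P Z = 0`; for a fixed `k`, the matrix `B = pfaffMinors k` of the Pfaffians `Pf(V ∖ {k,u,v})`
satisfies `Z B Z = P_k Z`. Writing `B = W + Wᵀ` with `W` strictly upper triangular, the matrix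
`G = Z W Z` has `G + Gᵀ = P_k Z` while `Pᵀ G P = (P Z) W (Z P) = 0`. Splitting `Pᵀ G P` into its
diagonal and off-diagonal parts gives `H₀ P_k = ∑_i G_ii P_i²`.
-/

open Finset Matrix MvPolynomial

theorem Finset.sum_sum_erase_eq_zero_of_symm {ι R : Type*} [DecidableEq ι] [Semiring R]
    [CharP R 2] (s : Finset ι) (f : ι → ι → R) (hf : ∀ i j, f i j = f j i) :
    ∑ i ∈ s, ∑ j ∈ s.erase i, f i j = 0 := by
  rw [← sum_finset_product' s.offDiag s (fun i => s.erase i) fun p => by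
    simp only [mem_offDiag, mem_erase]; tauto]
  refine sum_involution (fun p _ => p.swap) (fun p _ => ?_) (fun p hp _ => ?_)
    (fun p hp => ?_) (fun p _ => p.swap_swap)
  · rw [Prod.fst_swap, Prod.snd_swap, hf, CharTwo.add_self_eq_zero]
  · exact fun h => (mem_offDiag.1 hp).2.2 (congrArg Prod.snd h)
  · simp only [mem_offDiag] at hp ⊢; tauto

theorem Finset.sum_sum_eq_sum_diag_add_sum_lt {ι M : Type*} [Fintype ι] [LinearOrder ι]
    [AddCommMonoid M] (f : ι → ι → M) :
    ∑ i, ∑ j, f i j = ∑ i, f i i + ∑ p ∈ univ.filter (fun p : ι × ι => p.1 < p.2),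
      (f p.1 p.2 + f p.2 p.1) := by
  have hdiag : ∑ p ∈ univ.filter (fun p : ι × ι => ¬ p.1 < p.2 ∧ p.1 = p.2), f p.1 p.2
      = ∑ i, f i i := by
    simp +contextual [sum_filter, Fintype.sum_prod_type, and_iff_right_of_imp]
  have hgt : ∑ p ∈ univ.filter (fun p : ι × ι => ¬ p.1 < p.2 ∧ ¬ p.1 = p.2), f p.1 p.2
      = ∑ p ∈ univ.filter (fun p : ι × ι => p.1 < p.2), f p.2 p.1 :=
    sum_equiv (Equiv.prodComm ι ι) (fun p => by
      simp only [not_lt, mem_filter, mem_univ, true_and, Equiv.prodComm_apply, Prod.fst_swap,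
        Prod.snd_swap]
      grind) (by simp)
  rw [← Fintype.sum_prod_type', ← sum_filter_add_sum_filter_not univ (fun p : ι × ι => p.1 < p.2),
    ← sum_filter_add_sum_filter_not (univ.filter fun p : ι × ι => ¬ p.1 < p.2) (fun p => p.1 = p.2),
    filter_filter, filter_filter, hdiag, hgt, sum_add_distrib]
  abel

theorem Matrix.dotProduct_mulVec_self {ι R : Type*} [Fintype ι] [LinearOrder ι] [CommSemiring R]
    (G : Matrix ι ι R) (x : ι → R) :
    x ⬝ᵥ G *ᵥ x = ∑ i, G i i * x i ^ 2 + ∑ p ∈ univ.filter (fun p : ι × ι => p.1 < p.2),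
      (G + Gᵀ) p.1 p.2 * x p.1 * x p.2 := by
  simp only [dotProduct, mulVec, mul_sum]
  rw [sum_sum_eq_sum_diag_add_sum_lt]
  congr 1
  · exact sum_congr rfl fun i _ => by ring
  · exact sum_congr rfl fun p _ => by simp only [add_apply, transpose_apply]; ring

def Matrix.strictUpper {ι α : Type*} [LT ι] [DecidableLT ι] [Zero α] (B : Matrix ι ι α) :
    Matrix ι ι α :=
  of fun i j => if i < j then B i j else 0

theorem Matrix.strictUpper_add_transpose {ι α : Type*} [LinearOrder ι] [AddMonoid α]
    {B : Matrix ι ι α} (hB : Bᵀ = B) (hdiag : ∀ i, B i i = 0) :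
    B.strictUpper + B.strictUpperᵀ = B := by
  ext i j
  simp only [strictUpper, add_apply, transpose_apply, of_apply]
  rcases lt_trichotomy i j with h | rfl | h
  · simp [h, h.not_gt]
  · simp [hdiag]
  · simp [h, h.not_gt, ← congrFun (congrFun hB i) j]

section Pfaffians

variable {m : ℕ}

def edge {u v : Fin m} (h : u ≠ v) : Edge m := ⟨s(u, v), Sym2.mk_isDiag_iff.not.mpr h⟩

theorem mem_edge_iff {u v x : Fin m} (h : u ≠ v) : x ∈ (edge h).val ↔ x = u ∨ x = v :=
  Sym2.mem_iff

theorem Zv_of_ne {u v : Fin m} (h : u ≠ v) : Zv m u v = X (edge h) := dif_neg h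

theorem Zv_self (u : Fin m) : Zv m u u = 0 := dif_pos rfl

namespace IsPM

variable {T : Finset (Fin m)} {M : Finset (Edge m)}

theorem mem_of_mem (hM : IsPM m T M) {e : Edge m} (he : e ∈ M) {x : Fin m} (hx : x ∈ e.val) :
    x ∈ T :=
  (hM.1 x).2 ⟨e, he, hx⟩

theorem insert_edge (hM : IsPM m T M) {u v : Fin m} (hu : u ∉ T) (hv : v ∉ T) (huv : u ≠ v) :
    IsPM m (insert u (insert v T)) (insert (edge huv) M) := by
  refine ⟨fun x => ?_, fun e he f hf x hxe hxf => ?_⟩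
  · rw [exists_mem_insert, mem_edge_iff, mem_insert, mem_insert, hM.1, or_assoc]
  · rcases mem_insert.1 he with rfl | he <;> rcases mem_insert.1 hf with rfl | hf
    · rfl
    · have := hM.mem_of_mem hf hxf; rw [mem_edge_iff] at hxe; grind
    · have := hM.mem_of_mem he hxe; rw [mem_edge_iff] at hxf; grind
    · exact hM.2 e he f hf x hxe hxf

theorem erase_edge (hM : IsPM m T M) {u v : Fin m} (huv : u ≠ v) (he : edge huv ∈ M) :
    IsPM m ((T.erase u).erase v) (M.erase (edge huv)) := by
  refine ⟨fun x => ?_, fun e he f hf => hM.2 e (mem_of_mem_erase he) f (mem_of_mem_erase hf)⟩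
  simp only [mem_erase]
  constructor
  · rintro ⟨hxv, hxu, hxT⟩
    obtain ⟨f, hf, hxf⟩ := (hM.1 x).1 hxT
    refine ⟨f, ⟨?_, hf⟩, hxf⟩
    rintro rfl
    rw [mem_edge_iff] at hxf
    tauto
  · rintro ⟨f, ⟨hfe, hf⟩, hxf⟩
    have hx := hM.mem_of_mem hf hxf
    refine ⟨?_, ?_, hx⟩ <;> rintro rfl <;> refine hfe (hM.2 f hf _ he x hxf ?_) <;>
      simp [mem_edge_iff]

end IsPM

theorem sum_isPM_of_edge_mem {T : Finset (Fin m)} {u v : Fin m} (hu : u ∈ T) (hv : v ∈ T)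
    (huv : u ≠ v) :
    ∑ M ∈ univ.filter (fun M => IsPM m T M ∧ edge huv ∈ M), ∏ e ∈ M, X e
      = Zv m u v * matchSum m ((T.erase u).erase v) := by
  have hT : insert u (insert v ((T.erase u).erase v)) = T := by
    rw [insert_erase (mem_erase.2 ⟨huv.symm, hv⟩), insert_erase hu]
  have not_mem : ∀ {M}, IsPM m ((T.erase u).erase v) M → edge huv ∉ M := fun hM he =>
    by simpa using hM.mem_of_mem he ((mem_edge_iff huv).2 (Or.inl rfl))
  rw [matchSum, mul_sum, Zv_of_ne huv]
  symm
  refine sum_nbij' (insert (edge huv)) (fun M => M.erase (edge huv)) (fun M hM => ?_)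
    (fun M hM => ?_) (fun M hM => ?_) (fun M hM => ?_) (fun M hM => ?_)
  · simp only [mem_filter, mem_univ, true_and] at hM ⊢
    refine ⟨hT ▸ hM.insert_edge ?_ ?_ huv, mem_insert_self _ _⟩ <;> simp
  · simp only [mem_filter, mem_univ, true_and] at hM ⊢
    exact hM.1.erase_edge huv hM.2
  · simp only [mem_filter, mem_univ, true_and] at hM
    exact erase_insert (not_mem hM)
  · simp only [mem_filter, mem_univ, true_and] at hM
    exact insert_erase hM.2
  · simp only [mem_filter, mem_univ, true_and] at hM
    rw [prod_insert (not_mem hM)]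

theorem matchSum_eq_sum_erase {T : Finset (Fin m)} {u : Fin m} (hu : u ∈ T) :
    matchSum m T = ∑ v ∈ T.erase u, Zv m u v * matchSum m ((T.erase u).erase v) := by
  have partner : ∀ M, IsPM m T M → ∑ v ∈ T.erase u,
      (if ∃ e ∈ M, e.val = s(u, v) then ∏ e ∈ M, X e else 0) = ∏ e ∈ M, (X e : R2 m) := by
    intro M hM
    obtain ⟨e, he, hue⟩ := (hM.1 u).1 hu
    obtain ⟨c, hc⟩ := Sym2.mem_iff_exists.1 hue
    have hcu : c ≠ u := by rintro rfl; exact e.prop (hc ▸ Sym2.mk_isDiag_iff.2 rfl)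
    have hcT : c ∈ T := hM.mem_of_mem he (hc ▸ Sym2.mem_mk_right u c)
    rw [sum_eq_single_of_mem c (mem_erase.2 ⟨hcu, hcT⟩) fun v _ hvc => if_neg ?_,
      if_pos ⟨e, he, hc⟩]
    rintro ⟨f, hf, hfv⟩
    have hfe : f = e := hM.2 f hf e he u (hfv ▸ Sym2.mem_mk_left u v) hue
    subst hfe
    exact hvc (Sym2.congr_right.1 (hfv.symm.trans hc))
  calc matchSum m T
      = ∑ M ∈ univ.filter (IsPM m T), ∑ v ∈ T.erase u,
          if ∃ e ∈ M, e.val = s(u, v) then ∏ e ∈ M, X e else 0 :=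
        sum_congr rfl fun M hM => (partner M (mem_filter.1 hM).2).symm
    _ = ∑ v ∈ T.erase u, ∑ M ∈ univ.filter (fun M => IsPM m T M ∧ ∃ e ∈ M, e.val = s(u, v)),
          ∏ e ∈ M, X e := by
        rw [sum_comm]
        refine sum_congr rfl fun v _ => ?_
        rw [sum_filter, sum_filter]
        simp only [ite_and]
    _ = _ := sum_congr rfl fun v hv => by
        rw [← sum_isPM_of_edge_mem hu (mem_of_mem_erase hv) (ne_of_mem_erase hv).symm]
        refine sum_congr (filter_congr fun M _ => and_congr_right fun _ => ?_) fun _ _ => rfl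
        exact ⟨fun ⟨e, he, hev⟩ => (Subtype.ext hev : e = edge _) ▸ he, fun he => ⟨_, he, rfl⟩⟩

theorem sum_Zv_mul_matchSum_erase_eq_zero {T : Finset (Fin m)} {u : Fin m} (hu : u ∈ T) :
    ∑ v ∈ T.erase u, Zv m u v * matchSum m (T.erase v) = 0 := by
  calc ∑ v ∈ T.erase u, Zv m u v * matchSum m (T.erase v)
      = ∑ v ∈ T.erase u, ∑ w ∈ (T.erase u).erase v,
          Zv m u v * Zv m u w * matchSum m (((T.erase u).erase v).erase w) :=
        sum_congr rfl fun v hv => by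
          rw [matchSum_eq_sum_erase (mem_erase.2 ⟨(ne_of_mem_erase hv).symm, hu⟩), mul_sum,
            erase_right_comm]
          simp only [mul_assoc]
    _ = 0 := sum_sum_erase_eq_zero_of_symm _ _ fun v w => by
        rw [mul_comm (Zv m u v), erase_right_comm]

def zMatrix (m : ℕ) : Matrix (Fin m) (Fin m) (R2 m) := of (Zv m)

theorem zMatrix_transpose : (zMatrix m)ᵀ = zMatrix m :=
  ext fun i j => Zv_symm m j i

theorem vecMul_zMatrix : P m ᵥ* zMatrix m = 0 := funext fun u => by
  rw [Pi.zero_apply, ← sum_Zv_mul_matchSum_erase_eq_zero (mem_univ u), vecMul, dotProduct,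
    ← sum_erase _ (by rw [zMatrix, of_apply, Zv_self, mul_zero])]
  exact sum_congr rfl fun v _ => by rw [zMatrix, of_apply, Zv_symm, mul_comm]; rfl

theorem zMatrix_mulVec : zMatrix m *ᵥ P m = 0 := by
  rw [← zMatrix_transpose, mulVec_transpose, vecMul_zMatrix]

def pfaffMinors (k : Fin m) : Matrix (Fin m) (Fin m) (R2 m) :=
  of fun u v => if u ≠ k ∧ v ∈ (univ.erase k).erase u then
    matchSum m (((univ.erase k).erase u).erase v) else 0

theorem pfaffMinors_transpose (k : Fin m) : (pfaffMinors k)ᵀ = pfaffMinors k := by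
  refine Matrix.ext fun u v => ?_
  have hc : (v ≠ k ∧ u ∈ (univ.erase k).erase v) ↔ (u ≠ k ∧ v ∈ (univ.erase k).erase u) := by
    simp only [mem_erase, mem_univ, and_true]; tauto
  simp only [pfaffMinors, transpose_apply, of_apply, hc, erase_right_comm (a := v)]

theorem pfaffMinors_apply_self (k u : Fin m) : pfaffMinors k u u = 0 := by
  simp [pfaffMinors]

theorem pfaffMinors_mul_zMatrix_apply (k u j : Fin m) :
    (pfaffMinors k * zMatrix m) u j = if u = k then 0 else
      ∑ v ∈ (univ.erase k).erase u, matchSum m (((univ.erase k).erase u).erase v) * Zv m v j := by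
  split_ifs with hu
  · simp [mul_apply, pfaffMinors, hu]
  · simp only [mul_apply, pfaffMinors, zMatrix, of_apply, hu, ne_eq, not_false_eq_true,
      true_and, ite_mul, zero_mul, Fintype.sum_ite_mem]

theorem pfaffMinors_mul_zMatrix (k : Fin m) :
    pfaffMinors k * zMatrix m = P m k • 1 + vecMulVec (P m) (Pi.single k 1) := by
  refine Matrix.ext fun u j => ?_
  rw [pfaffMinors_mul_zMatrix_apply, Matrix.add_apply, Matrix.smul_apply, one_apply,
    vecMulVec_apply, Pi.single_apply]
  rcases eq_or_ne u k with rfl | hu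
  · rcases eq_or_ne j u with rfl | hju
    · simp [CharTwo.add_self_eq_zero]
    · simp [hju, hju.symm]
  rw [if_neg hu]
  have hsymm : ∀ (T : Finset (Fin m)) (i : Fin m), ∑ v ∈ T, matchSum m (T.erase v) * Zv m v i
      = ∑ v ∈ T, Zv m i v * matchSum m (T.erase v) :=
    fun T i => sum_congr rfl fun v _ => by rw [mul_comm, Zv_symm]
  rcases eq_or_ne j u with rfl | hju
  · rw [hsymm, if_pos rfl, if_neg hu, mul_zero, add_zero, smul_eq_mul, mul_one, P,
      matchSum_eq_sum_erase (mem_erase.2 ⟨hu, mem_univ j⟩)]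
  rcases eq_or_ne j k with rfl | hjk
  · rw [hsymm, if_neg (Ne.symm hju), if_pos rfl, smul_zero, zero_add, mul_one, P,
      matchSum_eq_sum_erase (mem_erase.2 ⟨Ne.symm hu, mem_univ j⟩), erase_right_comm]
  have hj : j ∈ (univ.erase k).erase u := mem_erase.2 ⟨hju, mem_erase.2 ⟨hjk, mem_univ j⟩⟩
  rw [hsymm, if_neg (Ne.symm hju), if_neg hjk, smul_zero, mul_zero, add_zero,
    ← sum_Zv_mul_matchSum_erase_eq_zero hj]
  exact (sum_erase _ (by rw [Zv_self, zero_mul])).symm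

theorem zMatrix_mul_pfaffMinors_mul_zMatrix (k : Fin m) :
    zMatrix m * pfaffMinors k * zMatrix m = P m k • zMatrix m := by
  rw [Matrix.mul_assoc, pfaffMinors_mul_zMatrix, Matrix.mul_add, Matrix.mul_smul, Matrix.mul_one,
    mul_vecMulVec, zMatrix_mulVec, zero_vecMulVec, add_zero]

theorem H0_mul_P_eq (k : Fin m) :
    H0 m * P m k = ∑ i, (zMatrix m * (pfaffMinors k).strictUpper * zMatrix m) i i * P m i ^ 2 := by
  set G := zMatrix m * (pfaffMinors k).strictUpper * zMatrix m
  have hG : G + Gᵀ = P m k • zMatrix m := by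
    rw [← zMatrix_mul_pfaffMinors_mul_zMatrix, ← strictUpper_add_transpose (pfaffMinors_transpose k)
      (pfaffMinors_apply_self k)]
    simp only [G, transpose_mul, zMatrix_transpose, Matrix.mul_assoc, ← Matrix.mul_add,
      ← Matrix.add_mul]
  have hform : P m ⬝ᵥ G *ᵥ P m = 0 := by
    simp only [G, dotProduct_mulVec, ← vecMul_vecMul, vecMul_zMatrix, zero_vecMul,
      zero_dotProduct]
  have hoff : ∑ p ∈ univ.filter (fun p : Fin m × Fin m => p.1 < p.2),
      (G + Gᵀ) p.1 p.2 * P m p.1 * P m p.2 = H0 m * P m k := by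
    rw [H0, sum_mul]
    refine sum_congr rfl fun p _ => ?_
    rw [hG, Matrix.smul_apply, zMatrix, of_apply, smul_eq_mul]
    ring
  rw [dotProduct_mulVec_self, hoff, CharTwo.add_eq_zero] at hform
  exact hform.symm

end Pfaffians

theorem H0_mul_ideal_sub_frobenius_power_general (m : ℕ) :
    ∀ x ∈ Ideal.span (Set.range (P m)),
      H0 m * x ∈ Ideal.span (Set.range (fun i : Fin m => P m i ^ 2)) := by
  set J := Ideal.span (Set.range (fun i : Fin m => P m i ^ 2))
  have hP : ∀ k, H0 m * P m k ∈ J := fun k => by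
    rw [H0_mul_P_eq]
    exact sum_mem fun i _ => Ideal.mul_mem_left _ _ (Ideal.subset_span ⟨i, rfl⟩)
  have hspan : Ideal.span (Set.range (P m)) ≤ Submodule.comap (LinearMap.mulLeft (R2 m) (H0 m)) J :=
    Ideal.span_le.2 (Set.range_subset_iff.2 hP)
  exact fun x hx => hspan hx

/-- `H₀·I ⊆ I^{[2]}` where `I = (P_1, …, P_m)` and `I^{[2]} = (P_1², …, P_m²)`;
that is, `H₀·x` lies in `(P_1², …, P_m²)` for every `x ∈ I` (equivalently, `H₀·P_i` does for
every `i`). -/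
theorem H0_mul_ideal_sub_frobenius_power (m : ℕ) (hm : 3 ≤ m) (hmodd : Odd m) :
    ∀ x ∈ Ideal.span (Set.range (P m)),
      H0 m * x ∈ Ideal.span (Set.range (fun i : Fin m => P m i ^ 2)) :=
  H0_mul_ideal_sub_frobenius_power_general m
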